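/- Let G be a divisible ordered abelian group and let G′ = ⟨g₁,…,gₙ⟩_div be the divisible hull of finitely many elements, with {g₁,…,gₙ} a valuation basis of G′. Suppose h₁ ≪ h₂ ≪ … ≪ h_l enumerate representatives of the archimedean classes of the gᵢ, with g_i ∼ h_{j_i} and r_{j_i} := g_i/h_{j_i} ∈ ℝ. Then for integers s₁,…,sₙ with largest-valuation nonzero part s_{i_1}g_{i_1} + … + s_{i_k}g_{i_k} (all g_{i_m} ∼ h for a common h), the sum s₁g₁ + … + sₙgₙ is positive if and only if s_{i_1} r_{j_{i_1}} + … + s_{i_k} r_{j_{i_k}} > 0. -/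

import Mathlib

/-!
Write `x ≈ r • h` (`HasRatio x h r`) when the rationals `q` with `q • h < x` form the Dedekind cut
of the real number `r`. This relation is additive and compatible with integer multiples; every `g`
whose archimedean class is not above that of `h` satisfies `g ≈ (g/h) • h`, and `x ≈ 0 • h` holds
exactly when `x` is infinitesimal with respect to `h`. Hence `∑ sᵢ • gᵢ ≈ r • h`, where `r` is the
real sum over the dominant terms. If `r ≠ 0`, its sign is the sign of the group element; `r = 0`
is impossible, since valuation independence puts `∑ sᵢ • gᵢ` in the archimedean class of `h`.
-/

/-- Archimedean equivalence: `x ∼ y` iff `∃ n ∈ ℕ, n|x| ≥ |y|` and `n|y| ≥ |x|`. -/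
def archEquiv {G : Type*} [AddCommGroup G] [LinearOrder G] [IsOrderedAddMonoid G] (x y : G) : Prop :=
  ∃ n : ℕ, |y| ≤ n • |x| ∧ |x| ≤ n • |y|

/-- `vlt x y` expresses `v x < v y` for the natural valuation:
`v x < v y` iff `∀ n, n|y| < |x|`. -/
def vlt {G : Type*} [AddCommGroup G] [LinearOrder G] [IsOrderedAddMonoid G] (x y : G) : Prop :=
  ∀ n : ℕ, n • |y| < |x|

/-- `vle x y` expresses `v x ≤ v y`. -/
def vle {G : Type*} [AddCommGroup G] [LinearOrder G] [IsOrderedAddMonoid G] (x y : G) : Prop :=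
  ¬ vlt y x

/-- `veq x y` expresses `v x = v y`. -/
def veq {G : Type*} [AddCommGroup G] [LinearOrder G] [IsOrderedAddMonoid G] (x y : G) : Prop :=
  vle x y ∧ vle y x

/-- The real number `g/h := sup {q ∈ ℚ : q • h < g}` for archimedean-equivalent
positive `g, h`. -/
noncomputable def ratio {G : Type*} [AddCommGroup G] [LinearOrder G] [IsOrderedAddMonoid G] [Module ℚ G]
    (g h : G) : ℝ :=
  sSup {r : ℝ | ∃ q : ℚ, r = (q : ℝ) ∧ q • h < g}

open ArchimedeanClass

section ArchimedeanClass

variable {G : Type*} [AddCommGroup G] [LinearOrder G] [IsOrderedAddMonoid G]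

theorem vle_iff_mk_le {x y : G} : vle x y ↔ mk x ≤ mk y := by
  simp only [vle, vlt, mk_le_mk, not_forall, not_lt]

theorem veq_iff_mk_eq {x y : G} : veq x y ↔ mk x = mk y := by
  rw [veq, vle_iff_mk_le, vle_iff_mk_le, le_antisymm_iff]

theorem archEquiv_iff_mk_eq {x y : G} : archEquiv x y ↔ mk x = mk y := by
  rw [archEquiv, mk_eq_mk]
  constructor
  · rintro ⟨n, hy, hx⟩
    exact ⟨⟨n, hy⟩, ⟨n, hx⟩⟩
  · rintro ⟨⟨m, hy⟩, ⟨n, hx⟩⟩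
    exact ⟨max m n, hy.trans (nsmul_le_nsmul_left (abs_nonneg x) (le_max_left m n)),
      hx.trans (nsmul_le_nsmul_left (abs_nonneg y) (le_max_right m n))⟩

end ArchimedeanClass

section HasRatio

variable {G : Type*} [AddCommGroup G] [LinearOrder G] [Module ℚ G] {x y g h : G} {r s : ℝ}

def HasRatio (x h : G) (r : ℝ) : Prop :=
  ∀ q : ℚ, ((q : ℝ) < r → q • h < x) ∧ (r < q → x < q • h)

theorem HasRatio.pos_iff (hx : HasRatio x h r) (hr : r ≠ 0) : 0 < x ↔ 0 < r := by
  rcases hr.lt_or_gt with hr | hr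
  · refine iff_of_false (fun hx0 => ?_) hr.not_gt
    simpa using hx0.trans ((hx 0).2 (by simpa using hr))
  · exact iff_of_true (by simpa using (hx 0).1 (by simpa using hr)) hr

variable [IsOrderedAddMonoid G]

instance IsOrderedAddMonoid.toPosSMulStrictMonoRat : PosSMulStrictMono ℚ G :=
  have : PosSMulMono ℚ G := .of_smul_nonneg fun q hq x hx => by
    have hden : q.den • q • x = q.num • x := by
      rw [← Nat.cast_smul_eq_nsmul ℚ, ← Int.cast_smul_eq_zsmul ℚ, smul_smul, Rat.den_mul_eq_num]
    have hnum : 0 ≤ q.num • x := zsmul_nonneg hx (Rat.num_nonneg.2 hq)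
    exact (nsmul_nonneg_iff q.den_ne_zero).1 (hden ▸ hnum)
  PosSMulMono.toPosSMulStrictMono

theorem HasRatio.pos (hx : HasRatio x h r) : 0 < h := by
  obtain ⟨a, -, ha⟩ := exists_rat_btwn (sub_one_lt r)
  obtain ⟨b, hb, -⟩ := exists_rat_btwn (lt_add_one r)
  have hab : 0 < (b - a) • h := by
    rw [sub_smul, sub_pos]
    exact ((hx a).1 ha).trans ((hx b).2 hb)
  exact pos_of_smul_pos_left hab (sub_nonneg.2 (by exact_mod_cast (ha.trans hb).le))

theorem HasRatio.zero (hh : 0 < h) : HasRatio 0 h 0 := fun q =>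
  ⟨fun hq => smul_neg_of_neg_of_pos (by exact_mod_cast hq) hh,
    fun hq => smul_pos (by exact_mod_cast hq) hh⟩

theorem HasRatio.neg (hx : HasRatio x h r) : HasRatio (-x) h (-r) := fun q =>
  ⟨fun hq => lt_neg.1 (neg_smul q h ▸ (hx (-q)).2 (by push_cast; linarith)),
    fun hq => neg_lt.1 (neg_smul q h ▸ (hx (-q)).1 (by push_cast; linarith))⟩

theorem HasRatio.add (hx : HasRatio x h r) (hy : HasRatio y h s) :
    HasRatio (x + y) h (r + s) := by
  intro q
  constructor
  · intro hq
    obtain ⟨a, has, har⟩ := exists_rat_btwn (show (q : ℝ) - s < r by linarith)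
    have hqa : ((q - a : ℚ) : ℝ) < s := by push_cast; linarith
    calc q • h = a • h + (q - a) • h := by rw [← add_smul, add_sub_cancel]
      _ < x + y := add_lt_add ((hx a).1 har) ((hy _).1 hqa)
  · intro hq
    obtain ⟨a, har, has⟩ := exists_rat_btwn (show r < (q : ℝ) - s by linarith)
    have hqa : s < ((q - a : ℚ) : ℝ) := by push_cast; linarith
    calc x + y < a • h + (q - a) • h := add_lt_add ((hx a).2 har) ((hy _).2 hqa)
      _ = q • h := by rw [← add_smul, add_sub_cancel]

theorem HasRatio.zsmul (hx : HasRatio x h r) (n : ℤ) : HasRatio (n • x) h (n * r) := by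
  induction n using Int.induction_on with
  | zero => simpa using HasRatio.zero hx.pos
  | succ n ih =>
    rw [add_zsmul, one_zsmul, Int.cast_add, Int.cast_one, add_one_mul]
    exact ih.add hx
  | pred n ih =>
    rw [sub_zsmul, one_zsmul, Int.cast_sub, Int.cast_one, sub_one_mul, sub_eq_add_neg]
    exact ih.add hx.neg

theorem HasRatio.sum {ι : Type*} (t : Finset ι) {f : ι → G} {c : ι → ℝ} (hh : 0 < h)
    (hf : ∀ i ∈ t, HasRatio (f i) h (c i)) : HasRatio (∑ i ∈ t, f i) h (∑ i ∈ t, c i) := by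
  induction t using Finset.cons_induction with
  | empty => simpa using HasRatio.zero hh
  | cons i t hi ih =>
    rw [Finset.sum_cons, Finset.sum_cons]
    exact (hf i (Finset.mem_cons_self i t)).add (ih fun j hj => hf j (Finset.mem_cons_of_mem hj))

theorem hasRatio_ratio (hh : 0 < h) (hg : mk h ≤ mk g) : HasRatio g h (ratio g h) := by
  obtain ⟨n, hn⟩ := mk_le_mk.1 hg
  rw [abs_of_pos hh, ← Nat.cast_smul_eq_nsmul ℚ] at hn
  have hne : {r : ℝ | ∃ q : ℚ, r = q ∧ q • h < g}.Nonempty := by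
    refine ⟨_, -n - 1, rfl, ?_⟩
    calc (-n - 1 : ℚ) • h < (-n : ℚ) • h := smul_lt_smul_of_pos_right (by linarith) hh
      _ ≤ -|g| := by rw [neg_smul]; exact neg_le_neg hn
      _ ≤ g := neg_abs_le g
  have hbdd : BddAbove {r : ℝ | ∃ q : ℚ, r = q ∧ q • h < g} := by
    refine ⟨n, ?_⟩
    rintro _ ⟨q, rfl, hq⟩
    exact_mod_cast (lt_of_smul_lt_smul_right (hq.trans_le ((le_abs_self g).trans hn)) hh.le).le
  intro q
  constructor
  · intro hq
    obtain ⟨_, ⟨a, rfl, ha⟩, hqa⟩ := exists_lt_of_lt_csSup hne hq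
    exact (smul_lt_smul_of_pos_right (by exact_mod_cast hqa) hh).trans ha
  · intro hq
    obtain ⟨a, hra, haq⟩ := exists_rat_btwn hq
    have hga : g ≤ a • h := not_lt.1 fun hlt => (le_csSup hbdd ⟨a, rfl, hlt⟩).not_gt hra
    exact hga.trans_lt (smul_lt_smul_of_pos_right (by exact_mod_cast haq) hh)

theorem hasRatio_zero_iff_forall_abs_lt :
    HasRatio x h 0 ↔ ∀ q : ℚ, 0 < q → |x| < q • h := by
  refine ⟨fun hx q hq => abs_lt.2 ⟨?_, (hx q).2 (by exact_mod_cast hq)⟩, fun hx q => ⟨?_, ?_⟩⟩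
  · rw [← neg_smul]
    exact (hx (-q)).1 (by exact_mod_cast neg_lt_zero.2 hq)
  · intro hq
    rw [← neg_neg q, neg_smul, neg_lt]
    exact (neg_le_abs x).trans_lt (hx (-q) (by exact_mod_cast neg_pos.2 hq))
  · intro hq
    exact (le_abs_self x).trans_lt (hx q (by exact_mod_cast hq))

theorem hasRatio_zero_iff_mk_lt (hh : 0 < h) : HasRatio x h 0 ↔ mk h < mk x := by
  rw [hasRatio_zero_iff_forall_abs_lt, mk_lt_mk, abs_of_pos hh]
  constructor
  · intro hx n
    have hn : (0 : ℚ) < n + 1 := by positivity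
    have hsmall := hx (n + 1)⁻¹ (inv_pos.2 hn)
    rw [lt_inv_smul_iff_of_pos hn] at hsmall
    calc n • |x| ≤ (n + 1) • |x| := nsmul_le_nsmul_left (abs_nonneg x) n.le_succ
      _ = ((n + 1 : ℚ)) • |x| := by rw [← Nat.cast_smul_eq_nsmul ℚ]; push_cast; rfl
      _ < h := hsmall
  · intro hx q hq
    obtain ⟨n, hn⟩ := exists_nat_gt q⁻¹
    have hn0 : (0 : ℚ) < n := (inv_pos.2 hq).trans hn
    calc |x| < (n : ℚ)⁻¹ • h := by
          rw [lt_inv_smul_iff_of_pos hn0, Nat.cast_smul_eq_nsmul]; exact hx n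
      _ < q • h := smul_lt_smul_of_pos_right (inv_lt_of_inv_lt₀ hq hn) hh

end HasRatio

theorem sign_by_dominant_component_general (G : Type*) [AddCommGroup G] [LinearOrder G] [IsOrderedAddMonoid G]
    [Module ℚ G] {n : ℕ} (g : Fin n → G)
    (hvi : ∀ q : Fin n → ℚ, ∀ i, q i ≠ 0 → (∀ j, q j ≠ 0 → vle (g i) (g j)) →
      veq (∑ j, q j • g j) (g i))
    (h : G) (hh : 0 < h) (s : Fin n → ℤ)
    (hmin : ∀ i, s i ≠ 0 → vle h (g i))
    (hK : ∃ i, s i ≠ 0 ∧ archEquiv h (g i)) :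
    (0 < ∑ i, s i • g i ↔
      0 < ∑ i, Set.indicator {i : Fin n | s i ≠ 0 ∧ archEquiv h (g i)}
        (fun i => (s i : ℝ) * ratio (g i) h) i) := by
  have hterm : ∀ i, HasRatio (s i • g i) h (Set.indicator {i | s i ≠ 0 ∧ archEquiv h (g i)}
      (fun i => (s i : ℝ) * ratio (g i) h) i) := by
    intro i
    by_cases hi : i ∈ {i | s i ≠ 0 ∧ archEquiv h (g i)}
    · rw [Set.indicator_of_mem hi]
      exact (hasRatio_ratio hh (archEquiv_iff_mk_eq.1 hi.2).le).zsmul (s i)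
    rw [Set.indicator_of_notMem hi]
    by_cases hs : s i = 0
    · simpa [hs] using HasRatio.zero hh
    have hlt : mk h < mk (g i) :=
      (vle_iff_mk_le.1 (hmin i hs)).lt_of_ne fun heq => hi ⟨hs, archEquiv_iff_mk_eq.2 heq⟩
    simpa using ((hasRatio_zero_iff_mk_lt hh).2 hlt).zsmul (s i)
  have hsum := HasRatio.sum Finset.univ hh fun i _ => hterm i
  refine hsum.pos_iff fun hr => ?_
  obtain ⟨i₀, hs₀, hi₀⟩ := hK
  have hclass : mk (∑ i, s i • g i) = mk h := by
    have hv := hvi (fun j => s j) i₀ (by exact_mod_cast hs₀) fun j hj =>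
      vle_iff_mk_le.2 ((archEquiv_iff_mk_eq.1 hi₀).symm.trans_le
        (vle_iff_mk_le.1 (hmin j (by exact_mod_cast hj))))
    simp only [Int.cast_smul_eq_zsmul] at hv
    exact (veq_iff_mk_eq.1 hv).trans (archEquiv_iff_mk_eq.1 hi₀).symm
  rw [hr, hasRatio_zero_iff_mk_lt hh, hclass] at hsum
  exact hsum.false

/-- let `g₁, …, gₙ` be a valuation basis (positive, valuation
independent) of the divisible hull `⟨g₁, …, gₙ⟩_div` in a divisible ordered abelian
group, let `h > 0` represent the minimal valuation (= dominating archimedean class)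
occurring among the monomials `sᵢ gᵢ` with integer `sᵢ ≠ 0`, occurring at least
once.  Then `s₁g₁ + … + sₙgₙ > 0` iff the real number
`Σ {sᵢ · (gᵢ/h) : sᵢ ≠ 0, gᵢ ∼ h}` is positive. -/
theorem sign_by_dominant_component (G : Type*) [AddCommGroup G] [LinearOrder G] [IsOrderedAddMonoid G]
    [Module ℚ G] {n : ℕ} (g : Fin n → G) (hgpos : ∀ i, 0 < g i)
    (hvi : ∀ q : Fin n → ℚ, ∀ i, q i ≠ 0 → (∀ j, q j ≠ 0 → vle (g i) (g j)) →
      veq (∑ j, q j • g j) (g i))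
    (h : G) (hh : 0 < h) (s : Fin n → ℤ)
    (hmin : ∀ i, s i ≠ 0 → vle h (g i))
    (hK : ∃ i, s i ≠ 0 ∧ archEquiv h (g i)) :
    (0 < ∑ i, s i • g i ↔
      0 < ∑ i, Set.indicator {i : Fin n | s i ≠ 0 ∧ archEquiv h (g i)}
        (fun i => (s i : ℝ) * ratio (g i) h) i) :=
  sign_by_dominant_component_general G g hvi h hh s hmin hK
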